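/- Let μ ∈ A^× with A a separable associative algebra of degree three over F, and let 0 ≠ x = (x₀,x₁,x₂) ∈ J(A,μ) with x^♯ = 0. Then either A has zero divisors, or A is a division algebra and μ ∈ N_A(A^×)·1. -/

import Mathlib

/-- A separable associative algebra of degree three over `F`:
an associative unital `F`-algebra `A` equipped with a cubic norm `NA`,
directional derivative `Ndir x y = N_A(x;y)` (the coefficient of `Z` in
`N_A(x+Zy)`), trace `TA`, quadratic form `SA`, adjoint `sharp` and bilinear
trace `Tbil`, satisfying the degree-3 identity, the trace-sharp formula and
the trace-product formula. -/
structure DegreeThreeAlg (F A : Type*) [Field F] [Ring A] [Algebra F A] where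
  NA : A → F
  Ndir : A → A → F
  TA : A → F
  SA : A → F
  sharp : A → A
  Tbil : A → A → F
  NA_one : NA 1 = 1
  NA_smul : ∀ (c : F) (x : A), NA (c • x) = c ^ 3 * NA x
  Ndir_expand : ∀ (x y : A) (z : F),
    NA (x + z • y) = NA x + z * Ndir x y + z ^ 2 * Ndir y x + z ^ 3 * NA y
  Ndir_add_right : ∀ x y z : A, Ndir x (y + z) = Ndir x y + Ndir x z
  Ndir_smul_right : ∀ (x : A) (c : F) (y : A), Ndir x (c • y) = c * Ndir x y
  TA_def : ∀ x : A, TA x = Ndir 1 x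
  SA_def : ∀ x : A, SA x = Ndir x 1
  sharp_def : ∀ x : A, sharp x = x ^ 2 - TA x • x + SA x • (1 : A)
  Tbil_def : ∀ x y : A,
    Tbil x y = TA x * TA y - (Ndir (1 + y) x - Ndir 1 x - Ndir y x)
  degree3 : ∀ x : A, x ^ 3 - TA x • x ^ 2 + SA x • x - NA x • (1 : A) = 0
  trace_sharp : ∀ x y : A, Tbil (sharp x) y = Ndir x y
  trace_product : ∀ x y : A, Tbil x y = TA (x * y)

variable {F A : Type*} [Field F] [Ring A] [Algebra F A]

/-- Conjugation `x̄ = ½(T_A(x)·1 − x)` in `A`. -/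
noncomputable def bar (D : DegreeThreeAlg F A) (x : A) : A :=
  (2 : F)⁻¹ • (D.TA x • (1 : A) - x)

/-- Linearization of the adjoint in `A`: `x ♯ y = (x+y)^♯ − x^♯ − y^♯`. -/
noncomputable def sharpBil (D : DegreeThreeAlg F A) (x y : A) : A :=
  D.sharp (x + y) - D.sharp x - D.sharp y

/-- `x × y = ½ (x ♯ y)` in `A`. -/
noncomputable def cross (D : DegreeThreeAlg F A) (x y : A) : A :=
  (2 : F)⁻¹ • sharpBil D x y

/-- Multiplication of the generalized first Tits construction `J(A,μ)` on `A ⊕ A ⊕ A`. -/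
noncomputable def Jmul (D : DegreeThreeAlg F A) (μ : Aˣ) (x y : A × A × A) : A × A × A :=
  ((2 : F)⁻¹ • (x.1 * y.1 + y.1 * x.1) + bar D (x.2.1 * y.2.2) + bar D (y.2.1 * x.2.2),
   bar D x.1 * y.2.1 + bar D y.1 * x.2.1 + (↑μ⁻¹ : A) * cross D x.2.2 y.2.2,
   x.2.2 * bar D y.1 + y.2.2 * bar D x.1 + (↑μ : A) * cross D x.2.1 y.2.1)

/-- Adjoint on `J(A,μ)`. -/
noncomputable def Jsharp (D : DegreeThreeAlg F A) (μ : Aˣ) (x : A × A × A) : A × A × A :=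
  (D.sharp x.1 - x.2.1 * x.2.2,
   (↑μ⁻¹ : A) * D.sharp x.2.2 - x.1 * x.2.1,
   (↑μ : A) * D.sharp x.2.1 - x.2.2 * x.1)

/-- Sharp map on `J(A,μ)`: linearization of the adjoint. -/
noncomputable def JsharpBil (D : DegreeThreeAlg F A) (μ : Aˣ) (x y : A × A × A) : A × A × A :=
  Jsharp D μ (x + y) - Jsharp D μ x - Jsharp D μ y

/-- Generalized trace on `J(A,μ)`. -/
def JT (D : DegreeThreeAlg F A) (x : A × A × A) : F := D.TA x.1

/-- Generalized bilinear trace on `J(A,μ)`. -/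
def JTbil (D : DegreeThreeAlg F A) (x y : A × A × A) : F :=
  D.TA (x.1 * y.1) + D.TA (x.2.1 * y.2.2) + D.TA (x.2.2 * y.2.1)

/-- Generalized cubic norm `N : J(A,μ) → A`. -/
noncomputable def JN (D : DegreeThreeAlg F A) (μ : Aˣ) (x : A × A × A) : A :=
  D.NA x.1 • (1 : A) + D.NA x.2.1 • (↑μ : A) + D.NA x.2.2 • (↑μ⁻¹ : A)
    - D.TA (x.1 * x.2.1 * x.2.2) • (1 : A)

/-- The unit `1 = (1,0,0)` of `J(A,μ)`. -/
def Jone : A × A × A := ((1 : A), (0 : A), (0 : A))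

section AuxLemmas

variable (D : DegreeThreeAlg F A)

lemma d3_NA_zero : D.NA 0 = 0 := by
  have h := D.NA_smul 0 (0 : A)
  simpa using h

lemma d3_Ndir_right_zero (x : A) : D.Ndir x 0 = 0 := by
  have h := D.Ndir_smul_right x 0 x
  simpa using h

lemma d3_Ndir_left_zero (y : A) : D.Ndir 0 y = 0 := by
  have h := D.Ndir_expand 0 y 1
  simp [d3_NA_zero, d3_Ndir_right_zero] at h
  linear_combination h

lemma d3_TA_add (x y : A) : D.TA (x + y) = D.TA x + D.TA y := by
  rw [D.TA_def, D.TA_def, D.TA_def, D.Ndir_add_right]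

lemma d3_TA_smul (c : F) (x : A) : D.TA (c • x) = c * D.TA x := by
  rw [D.TA_def, D.TA_def, D.Ndir_smul_right]

lemma d3_TA_zero : D.TA 0 = 0 := by
  rw [D.TA_def, d3_Ndir_right_zero]

lemma d3_TA_sub (x y : A) : D.TA (x - y) = D.TA x - D.TA y := by
  have h : x - y = x + (-1 : F) • y := by rw [neg_one_smul]; abel
  rw [h, d3_TA_add, d3_TA_smul]; ring

lemma d3_TA_one (h2 : (2:F) ≠ 0) : D.TA 1 = 3 := by
  have h := D.Ndir_expand (1 : A) (1 : A) 1
  have h1 : (1 : A) + (1:F) • (1:A) = (2:F) • (1:A) := by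
    rw [one_smul, two_smul]
  rw [h1, D.NA_smul, D.NA_one] at h
  rw [D.TA_def]
  have h8 : (2:F)^3 = 8 := by norm_num
  rw [h8] at h
  simp at h
  apply mul_left_cancel₀ h2
  linear_combination -h

lemma d3_SA_one (h2 : (2:F) ≠ 0) : D.SA 1 = 3 := by
  rw [D.SA_def, ← D.TA_def, d3_TA_one D h2]

lemma d3_G_eq (a b c : A) :
    D.Ndir (a + b) c - D.Ndir a c - D.Ndir b c =
      D.NA (a + b + c) - D.NA (a + b) - D.NA (a + c) - D.NA (b + c)
        + D.NA a + D.NA b + D.NA c := by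
  have h1 := D.Ndir_expand (a + b) c 1
  have h2 := D.Ndir_expand a c 1
  have h3 := D.Ndir_expand b c 1
  have h4 := D.Ndir_add_right c a b
  simp only [one_smul, one_mul, one_pow] at h1 h2 h3
  rw [h4] at h1
  linear_combination -h1 + h2 + h3

lemma d3_G_symm (a b c : A) :
    D.Ndir (a + b) c - D.Ndir a c - D.Ndir b c =
      D.Ndir (c + b) a - D.Ndir c a - D.Ndir b a := by
  rw [d3_G_eq, d3_G_eq]
  rw [show c + b + a = a + b + c from by abel, show c + b = b + c from by abel,
    show c + a = a + c from by abel, show b + a = a + b from by abel]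
  ring

lemma d3_Tbil_comm (x y : A) : D.Tbil x y = D.Tbil y x := by
  rw [D.Tbil_def, D.Tbil_def]
  have e1 := d3_G_symm D (1 : A) y x
  have e2 := d3_G_symm D (1 : A) x y
  rw [show y + x = x + y from by abel] at e2
  linear_combination e2 - e1

lemma d3_T_mul_comm (x y : A) : D.TA (x * y) = D.TA (y * x) := by
  rw [← D.trace_product, ← D.trace_product, d3_Tbil_comm]

lemma d3_Ndir_trace (x y : A) : D.Ndir x y = D.TA (D.sharp x * y) := by
  rw [← D.trace_sharp, D.trace_product]

lemma d3_T_sharp (y : A) : D.TA (D.sharp y) = D.SA y := by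
  rw [D.SA_def, d3_Ndir_trace, mul_one]

lemma d3_T_sq (h2 : (2:F) ≠ 0) (y : A) : D.TA (y * y) = D.TA y ^ 2 - 2 * D.SA y := by
  have h := d3_T_sharp D y
  rw [D.sharp_def, pow_two] at h
  rw [d3_TA_add, d3_TA_sub, d3_TA_smul, d3_TA_smul, d3_TA_one D h2] at h
  linear_combination h

lemma d3_S_smul (c : F) (y : A) : D.SA (c • y) = c ^ 2 * D.SA y := by
  have h1 := D.Ndir_expand (c • y) (1 : A) 1
  have hb := D.Ndir_expand (1 : A) y c
  have h3 : c • y + (1:F) • (1:A) = (1 : A) + c • y := by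
    rw [one_smul, add_comm]
  rw [h3, D.NA_smul, D.Ndir_smul_right, D.NA_one] at h1
  rw [D.NA_one] at hb
  rw [D.SA_def, D.SA_def]
  linear_combination hb - h1

lemma d3_S_add (x y : A) :
    D.SA (x + y) = D.SA x + D.SA y + D.TA x * D.TA y - D.TA (x * y) := by
  have hg := d3_G_symm D x y (1 : A)
  have hb := D.Tbil_def x y
  have hp := D.trace_product x y
  rw [D.SA_def, D.SA_def, D.SA_def]
  linear_combination hg + hb - hp

lemma d3_N_shift (x : A) (t : F) :
    D.NA (x + t • 1) = D.NA x + t * D.SA x + t ^ 2 * D.TA x + t ^ 3 := by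
  have h := D.Ndir_expand x (1 : A) t
  rw [← D.SA_def, ← D.TA_def, D.NA_one] at h
  rw [h]; ring

lemma d3_S_shift (h2 : (2:F) ≠ 0) (x : A) (t : F) :
    D.SA (x + t • 1) = D.SA x + 2 * t * D.TA x + 3 * t ^ 2 := by
  rw [d3_S_add, d3_S_smul, d3_SA_one D h2, d3_TA_smul, d3_TA_one D h2,
    mul_smul_comm, mul_one, d3_TA_smul]
  ring

lemma d3_cube (y : A) :
    (y * y) * y = D.TA y • (y * y) - D.SA y • y + D.NA y • (1 : A) := by
  have h := D.degree3 y
  rw [pow_succ, pow_two] at h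
  rw [sub_eq_zero] at h
  rw [← h]; abel

end AuxLemmas
section Aux2
variable (D : DegreeThreeAlg F A)

lemma d3_sq_sharp (u : A) :
    D.sharp u * D.sharp u =
      D.SA u • (u * u) + (D.NA u - D.TA u * D.SA u) • u
        + (D.SA u ^ 2 - D.TA u * D.NA u) • (1 : A) := by
  have c3 := d3_cube D u
  have c3' : u * (u * u) = D.TA u • (u * u) - D.SA u • u + D.NA u • (1 : A) := by
    rw [← mul_assoc]; exact c3
  have c4 : (u * u) * (u * u)
      = (D.TA u ^ 2 - D.SA u) • (u * u) + (D.NA u - D.TA u * D.SA u) • u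
        + (D.TA u * D.NA u) • (1 : A) := by
    have e : (u * u) * (u * u) = ((u * u) * u) * u := (mul_assoc (u*u) u u).symm
    rw [e, c3, add_mul, sub_mul, smul_mul_assoc, smul_mul_assoc, smul_mul_assoc, one_mul, c3]
    module
  rw [D.sharp_def, pow_two]
  simp only [sub_mul, mul_sub, add_mul, mul_add, smul_mul_assoc, mul_smul_comm,
    smul_smul, mul_one, one_mul]
  rw [c4, c3, c3']
  module

lemma d3_S_sharp (h2 : (2:F) ≠ 0) (u : A) : D.SA (D.sharp u) = D.TA u * D.NA u := by
  have ha := d3_T_sq D h2 (D.sharp u)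
  have hb := congrArg D.TA (d3_sq_sharp D u)
  rw [d3_TA_add, d3_TA_add, d3_TA_smul, d3_TA_smul, d3_TA_smul, d3_TA_one D h2,
    d3_T_sq D h2 u] at hb
  rw [d3_T_sharp] at ha
  apply mul_left_cancel₀ h2
  linear_combination ha - hb

lemma d3_sharp_sharp (h2 : (2:F) ≠ 0) (u : A) :
    D.sharp (D.sharp u) = D.NA u • u := by
  rw [D.sharp_def (D.sharp u), pow_two (D.sharp u), d3_sq_sharp, d3_T_sharp,
    d3_S_sharp D h2, D.sharp_def u, pow_two u]
  module

lemma smul_one_eq_zero_iff (hone : (1:A) ≠ 0) {c : F} (h : c • (1:A) = 0) : c = 0 := by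
  by_contra hc
  apply hone
  calc (1:A) = c⁻¹ • (c • (1:A)) := by rw [smul_smul, inv_mul_cancel₀ hc, one_smul]
  _ = 0 := by rw [h, smul_zero]

lemma smul_cancel_ne {c : F} (hc : c ≠ 0) {x : A} (h : c • x = 0) : x = 0 := by
  calc x = c⁻¹ • (c • x) := by rw [smul_smul, inv_mul_cancel₀ hc, one_smul]
  _ = 0 := by rw [h, smul_zero]

lemma d3_N_sharp (h2 : (2:F) ≠ 0) (hone : (1:A) ≠ 0)
    (hsh : ∀ y : A, y * D.sharp y = D.NA y • (1 : A) ∧ D.sharp y * y = D.NA y • (1 : A))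
    (u : A) : D.NA (D.sharp u) = D.NA u ^ 2 := by
  have h1 := (hsh (D.sharp u)).1
  rw [d3_sharp_sharp D h2, mul_smul_comm, (hsh u).2, smul_smul] at h1
  have h0 : (D.NA u * D.NA u - D.NA (D.sharp u)) • (1:A) = 0 := by
    rw [sub_smul, h1, sub_self]
  have := smul_one_eq_zero_iff hone h0
  linear_combination -this

end Aux2
section Aux3
variable (D : DegreeThreeAlg F A)

lemma d3_star (h2 : (2:F) ≠ 0) (u v : A) :
    D.TA (D.sharp v * D.sharp u) = D.SA (u * v) := by
  have cu := d3_cube D u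
  have cv := d3_cube D v
  -- element: cube identity for u+v, multiplied by v
  have hYc := d3_cube D (u + v)
  have hYv : (((u+v)*(u+v))*(u+v))*v
      = D.TA (u+v) • (((u+v)*(u+v))*v) - D.SA (u+v) • ((u+v)*v) + D.NA (u+v) • v := by
    rw [hYc, add_mul, sub_mul, smul_mul_assoc, smul_mul_assoc, smul_mul_assoc, one_mul]
  have hLexp : (((u+v)*(u+v))*(u+v))*v
      = ((u*u)*u)*v + (((u*u)*v)*v + ((u*v)*u)*v + ((v*u)*u)*v)
        + (((u*v)*v)*v + ((v*u)*v)*v + ((v*v)*u)*v) + ((v*v)*v)*v := by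
    noncomm_ring
  have hτ := congrArg D.TA hYv
  rw [hLexp] at hτ
  simp only [d3_TA_add, d3_TA_sub, d3_TA_smul] at hτ
  -- cyclic conversions
  have cv1 : D.TA (((v*u)*u)*v) = D.TA (((u*u)*v)*v) := by
    rw [show ((v*u)*u)*v = v*((u*u)*v) from by noncomm_ring, d3_T_mul_comm D v ((u*u)*v)]
  have cv2 : D.TA (((u*v)*v)*v) = D.TA (u*((v*v)*v)) := by
    rw [show ((u*v)*v)*v = u*((v*v)*v) from by noncomm_ring]
  have cv3 : D.TA (((v*u)*v)*v) = D.TA (u*((v*v)*v)) := by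
    rw [show ((v*u)*v)*v = v*(u*(v*v)) from by noncomm_ring, d3_T_mul_comm D v (u*(v*v)),
      show (u*(v*v))*v = u*((v*v)*v) from by noncomm_ring]
  have cv4 : D.TA (((v*v)*u)*v) = D.TA (u*((v*v)*v)) := by
    rw [show ((v*v)*u)*v = (v*v)*(u*v) from by noncomm_ring, d3_T_mul_comm D (v*v) (u*v),
      show (u*v)*(v*v) = u*((v*v)*v) from by noncomm_ring]
  -- cube reductions
  have r1 : D.TA (((u*u)*u)*v)
      = D.TA u * D.TA ((u*u)*v) - D.SA u * D.TA (u*v) + D.NA u * D.TA v := by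
    have e : ((u*u)*u)*v = D.TA u • ((u*u)*v) - D.SA u • (u*v) + D.NA u • v := by
      rw [cu, add_mul, sub_mul, smul_mul_assoc, smul_mul_assoc, smul_mul_assoc, one_mul]
    rw [e, d3_TA_add, d3_TA_sub, d3_TA_smul, d3_TA_smul, d3_TA_smul]
  have r2 : D.TA (((v*v)*v)*v)
      = D.TA v * D.TA ((v*v)*v) - D.SA v * D.TA (v*v) + D.NA v * D.TA v := by
    have e : ((v*v)*v)*v = D.TA v • ((v*v)*v) - D.SA v • (v*v) + D.NA v • v := by
      conv_lhs => rw [cv]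
      rw [add_mul, sub_mul, smul_mul_assoc, smul_mul_assoc, smul_mul_assoc, one_mul]
    rw [e, d3_TA_add, d3_TA_sub, d3_TA_smul, d3_TA_smul, d3_TA_smul]
  have r3 : D.TA (u*((v*v)*v))
      = D.TA v * D.TA (u*(v*v)) - D.SA v * D.TA (u*v) + D.NA v * D.TA u := by
    have e : u*((v*v)*v) = D.TA v • (u*(v*v)) - D.SA v • (u*v) + D.NA v • u := by
      rw [cv, mul_add, mul_sub, mul_smul_comm, mul_smul_comm, mul_smul_comm, mul_one]
    rw [e, d3_TA_add, d3_TA_sub, d3_TA_smul, d3_TA_smul, d3_TA_smul]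
  have r4 : D.TA ((v*v)*v)
      = D.TA v * D.TA (v*v) - D.SA v * D.TA v + D.NA v * 3 := by
    rw [cv, d3_TA_add, d3_TA_sub, d3_TA_smul, d3_TA_smul, d3_TA_smul, d3_TA_one D h2]
  -- scalar expansions of the composite quantities
  have s1 : D.TA (((u+v)*(u+v))*v)
      = D.TA ((u*u)*v) + 2 * D.TA (u*(v*v)) + D.TA ((v*v)*v) := by
    have e : ((u+v)*(u+v))*v = (u*u)*v + (u*v)*v + (v*u)*v + (v*v)*v := by noncomm_ring
    have c1 : D.TA ((u*v)*v) = D.TA (u*(v*v)) := by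
      rw [show (u*v)*v = u*(v*v) from by noncomm_ring]
    have c2' : D.TA ((v*u)*v) = D.TA (u*(v*v)) := by
      rw [d3_T_mul_comm D (v*u) v, show v*(v*u) = (v*v)*u from by noncomm_ring,
        d3_T_mul_comm D (v*v) u]
    rw [e, d3_TA_add, d3_TA_add, d3_TA_add, c1, c2']
    ring
  have s2 : D.TA ((u+v)*v) = D.TA (u*v) + D.TA (v*v) := by
    rw [show (u+v)*v = u*v + v*v from by noncomm_ring, d3_TA_add]
  have s4 := d3_S_add D u v
  have s5 : D.NA (u+v) = D.NA u + D.Ndir u v + D.Ndir v u + D.NA v := by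
    have h := D.Ndir_expand u v 1
    rw [one_smul] at h
    rw [h]; ring
  have s6 : D.Ndir u v = D.TA ((u*u)*v) - D.TA u * D.TA (u*v) + D.SA u * D.TA v := by
    rw [d3_Ndir_trace, D.sharp_def, pow_two u]
    rw [show (u*u - D.TA u • u + D.SA u • (1:A)) * v
        = (u*u)*v - D.TA u • (u*v) + D.SA u • v from by
      rw [add_mul, sub_mul, smul_mul_assoc, smul_mul_assoc, one_mul]]
    rw [d3_TA_add, d3_TA_sub, d3_TA_smul, d3_TA_smul]
  have s7 : D.Ndir v u = D.TA (u*(v*v)) - D.TA v * D.TA (u*v) + D.SA v * D.TA u := by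
    rw [d3_Ndir_trace, D.sharp_def, pow_two v]
    rw [show (v*v - D.TA v • v + D.SA v • (1:A)) * u
        = (v*v)*u - D.TA v • (v*u) + D.SA v • u from by
      rw [add_mul, sub_mul, smul_mul_assoc, smul_mul_assoc, one_mul]]
    rw [d3_TA_add, d3_TA_sub, d3_TA_smul, d3_TA_smul, d3_T_mul_comm D (v*v) u,
      d3_T_mul_comm D v u]
  rw [cv1, cv2, cv3, cv4, r1, r2, s1, s2, s4, s5, s6, s7] at hτ
  simp only [r3, r4] at hτ
  -- T_sq relations
  have q1 := d3_T_sq D h2 u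
  have q2 := d3_T_sq D h2 v
  have q3c : D.TA (((u*v)*u)*v) = D.TA (u*v) ^ 2 - 2 * D.SA (u*v) := by
    rw [show ((u*v)*u)*v = (u*v)*(u*v) from by noncomm_ring]
    exact d3_T_sq D h2 (u*v)
  -- key scalar consequence
  have keyA : 2 * D.TA (((u*u)*v)*v) + D.TA (((u*v)*u)*v)
      = D.TA (u*v) ^ 2 + 2 * D.TA v * D.TA ((u*u)*v) + 2 * D.TA u * D.TA (u*(v*v))
        - 2 * D.TA u * D.TA v * D.TA (u*v) + 2 * D.SA u * D.SA v := by
    linear_combination hτ + (D.TA (u*v) - D.SA u) * q2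
  -- expansion of the left-hand side
  have e1 : D.sharp v * D.sharp u
      = D.sharp v * (u*u) - D.TA u • (D.sharp v * u) + D.SA u • D.sharp v := by
    conv_lhs => rw [D.sharp_def u, pow_two u]
    rw [mul_add, mul_sub, mul_smul_comm, mul_smul_comm, mul_one]
  have e2 : D.sharp v * (u*u) = (v*v)*(u*u) - D.TA v • (v*(u*u)) + D.SA v • (u*u) := by
    rw [D.sharp_def v, pow_two v, add_mul, sub_mul, smul_mul_assoc, smul_mul_assoc, one_mul]
  have e3 : D.sharp v * u = (v*v)*u - D.TA v • (v*u) + D.SA v • u := by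
    rw [D.sharp_def v, pow_two v, add_mul, sub_mul, smul_mul_assoc, smul_mul_assoc, one_mul]
  have e0 : D.sharp v = v*v - D.TA v • v + D.SA v • (1:A) := by
    rw [D.sharp_def v, pow_two v]
  have cA : D.TA ((v*v)*(u*u)) = D.TA (((u*u)*v)*v) := by
    rw [d3_T_mul_comm D (v*v) (u*u), show (u*u)*(v*v) = ((u*u)*v)*v from by noncomm_ring]
  have cB : D.TA ((v*v)*u) = D.TA (u*(v*v)) := d3_T_mul_comm D (v*v) u
  have cC : D.TA (v*(u*u)) = D.TA ((u*u)*v) := d3_T_mul_comm D v (u*u)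
  have cD : D.TA (v*u) = D.TA (u*v) := d3_T_mul_comm D v u
  have hexpT : D.TA (D.sharp v * D.sharp u)
      = D.TA (((u*u)*v)*v) - D.TA u * D.TA (u*(v*v)) + D.SA u * D.TA (v*v)
        - D.TA v * D.TA ((u*u)*v) + D.TA v * D.TA u * D.TA (u*v)
        - D.TA v * D.SA u * D.TA v + D.SA v * D.TA (u*u)
        - D.SA v * D.TA u * D.TA u + D.SA v * D.SA u * 3 := by
    rw [e1, e2, e3, e0]
    simp only [d3_TA_add, d3_TA_sub, d3_TA_smul]
    rw [cA, cB, cC, cD, d3_TA_one D h2]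
    ring
  apply mul_left_cancel₀ h2
  linear_combination 2 * hexpT + keyA - q3c + 2 * D.SA u * q2 + 2 * D.SA v * q1

end Aux3
section Aux4
variable (D : DegreeThreeAlg F A)

lemma d3_master (h2 : (2:F) ≠ 0)
    (hsh : ∀ y : A, y * D.sharp y = D.NA y • (1 : A) ∧ D.sharp y * y = D.NA y • (1 : A))
    (u y : A) (hw : D.NA (u*y) ≠ 0) :
    (D.NA (u*y) - D.NA u * D.NA y) * D.SA (u*y) = 0 := by
  have hD : (u*y) * (D.sharp (u*y) - D.sharp y * D.sharp u)
      = (D.NA (u*y) - D.NA u * D.NA y) • (1:A) := by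
    rw [mul_sub, (hsh (u*y)).1]
    have hx : (u*y) * (D.sharp y * D.sharp u) = (D.NA y * D.NA u) • (1:A) := by
      calc (u*y) * (D.sharp y * D.sharp u) = u*((y*D.sharp y)*D.sharp u) := by
            simp [mul_assoc]
      _ = u*((D.NA y • (1:A))*D.sharp u) := by rw [(hsh y).1]
      _ = (D.NA y * D.NA u) • (1:A) := by
            rw [smul_mul_assoc, one_mul, mul_smul_comm, (hsh u).1, smul_smul]
    rw [hx, ← sub_smul, mul_comm (D.NA y) (D.NA u)]
  have hiw : ((D.NA (u*y))⁻¹ • D.sharp (u*y)) * (u*y) = 1 := by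
    rw [smul_mul_assoc, (hsh (u*y)).2, smul_smul, inv_mul_cancel₀ hw, one_smul]
  have hDval : D.sharp (u*y) - D.sharp y * D.sharp u
      = ((D.NA (u*y) - D.NA u * D.NA y) * (D.NA (u*y))⁻¹) • D.sharp (u*y) := by
    calc D.sharp (u*y) - D.sharp y * D.sharp u
        = (((D.NA (u*y))⁻¹ • D.sharp (u*y)) * (u*y))
            * (D.sharp (u*y) - D.sharp y * D.sharp u) := by rw [hiw, one_mul]
    _ = ((D.NA (u*y))⁻¹ • D.sharp (u*y))
          * ((u*y) * (D.sharp (u*y) - D.sharp y * D.sharp u)) := by rw [mul_assoc]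
    _ = ((D.NA (u*y))⁻¹ • D.sharp (u*y)) * ((D.NA (u*y) - D.NA u * D.NA y) • (1:A)) := by
          rw [hD]
    _ = ((D.NA (u*y) - D.NA u * D.NA y) * (D.NA (u*y))⁻¹) • D.sharp (u*y) := by
          rw [mul_smul_comm, mul_one, smul_smul]
  have hT := congrArg D.TA hDval
  rw [d3_TA_sub, d3_TA_smul, d3_T_sharp, d3_star D h2 u y] at hT
  have hz : (D.NA (u*y) - D.NA u * D.NA y) * D.SA (u*y) * (D.NA (u*y))⁻¹ = 0 := by
    linear_combination -hT
  rcases mul_eq_zero.mp hz with h | h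
  · exact h
  · exact absurd h (inv_ne_zero hw)

lemma d3_key_mult (h2 : (2:F) ≠ 0) (h3 : (3:F) ≠ 0) (hone : (1:A) ≠ 0)
    (hsh : ∀ y : A, y * D.sharp y = D.NA y • (1 : A) ∧ D.sharp y * y = D.NA y • (1 : A))
    (hdivN : ∀ a : A, a ≠ 0 → D.NA a ≠ 0)
    (u v : A) (hu0 : u ≠ 0) (hv0 : v ≠ 0) :
    D.NA (u*v) = D.NA u * D.NA v := by
  have hu := hdivN u hu0
  have hv := hdivN v hv0
  set iu := (D.NA u)⁻¹ • D.sharp u with hiu_def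
  have hui : u * iu = 1 := by
    rw [hiu_def, mul_smul_comm, (hsh u).1, smul_smul, inv_mul_cancel₀ hu, one_smul]
  have hiu : iu * u = 1 := by
    rw [hiu_def, smul_mul_assoc, (hsh u).2, smul_smul, inv_mul_cancel₀ hu, one_smul]
  have hNiu : D.NA iu = (D.NA u)⁻¹ := by
    rw [hiu_def, D.NA_smul, d3_N_sharp D h2 hone hsh]
    field_simp
  by_cases hsc : ∃ c : F, u * v = c • (1:A)
  · obtain ⟨c, hc⟩ := hsc
    have hvc : v = c • iu := by
      calc v = (iu * u) * v := by rw [hiu, one_mul]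
      _ = iu * (u * v) := by rw [mul_assoc]
      _ = iu * (c • 1) := by rw [hc]
      _ = c • iu := by rw [mul_smul_comm, mul_one]
    rw [hc, hvc, D.NA_smul, D.NA_smul, D.NA_one, hNiu]
    field_simp
  · push_neg at hsc
    have hwt0 : ∀ t : F, u*v + t • (1:A) ≠ 0 := by
      intro t h
      refine hsc (-t) ?_
      rw [neg_smul]
      exact eq_neg_of_add_eq_zero_left h
    have key : ∀ t : F,
        (D.NA (u*v) + t * D.SA (u*v) + t^2 * D.TA (u*v) + t^3
          - D.NA u * (D.NA v + t * D.Ndir v iu + t^2 * D.Ndir iu v + t^3 * (D.NA u)⁻¹))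
        * (D.SA (u*v) + 2*t*D.TA (u*v) + 3*t^2) = 0 := by
      intro t
      have hmul : u * (v + t • iu) = u*v + t • (1:A) := by
        rw [mul_add, mul_smul_comm, hui]
      have hm := d3_master D h2 hsh u (v + t • iu) (by rw [hmul]; exact hdivN _ (hwt0 t))
      rw [hmul] at hm
      rw [d3_N_shift D (u*v) t, d3_S_shift D h2 (u*v) t] at hm
      rw [D.Ndir_expand v iu t, hNiu] at hm
      linear_combination hm
    have key' : ∀ t : F,
        ((D.NA (u*v) - D.NA u * D.NA v) + (D.SA (u*v) - D.NA u * D.Ndir v iu) * t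
          + (D.TA (u*v) - D.NA u * D.Ndir iu v) * t^2)
          * (D.SA (u*v) + 2*D.TA (u*v)*t + 3*t^2) = 0 := by
      intro t
      have hc : D.NA u * (D.NA u)⁻¹ = 1 := mul_inv_cancel₀ hu
      linear_combination key t + (t^3 * (D.SA (u*v) + 2*D.TA (u*v)*t + 3*t^2)) * hc
    have e0 := key' 0
    have e1 := key' 1
    have em1 := key' (-1)
    have e2' := key' 2
    have em2 := key' (-2)
    have h72 : (72:F) ≠ 0 := by
      have h : (72:F) = 2*2*2*3*3 := by norm_num
      rw [h]
      exact mul_ne_zero (mul_ne_zero (mul_ne_zero (mul_ne_zero h2 h2) h2) h3) h3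
    have h36 : (36:F) ≠ 0 := by
      have h : (36:F) = 2*2*3*3 := by norm_num
      rw [h]
      exact mul_ne_zero (mul_ne_zero (mul_ne_zero h2 h2) h3) h3
    have h6 : (6:F) ≠ 0 := by
      have h : (6:F) = 2*3 := by norm_num
      rw [h]
      exact mul_ne_zero h2 h3
    have hd2 : D.TA (u*v) - D.NA u * D.Ndir iu v = 0 := by
      have h : (72:F) * (D.TA (u*v) - D.NA u * D.Ndir iu v) = 0 := by
        linear_combination e2' + em2 - 4*e1 - 4*em1 + 6*e0
      exact (mul_eq_zero.mp h).resolve_left h72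
    have hd1 : D.SA (u*v) - D.NA u * D.Ndir v iu = 0 := by
      have h : (36:F) * (D.SA (u*v) - D.NA u * D.Ndir v iu) = 0 := by
        linear_combination e2' - em2 - 2*e1 + 2*em1 - 24*D.TA (u*v)*hd2
      exact (mul_eq_zero.mp h).resolve_left h36
    have hd0 : (6:F) * (D.NA (u*v) - D.NA u * D.NA v) = 0 := by
      linear_combination e1 + em1 - 2*e0 - 4*D.TA (u*v)*hd1 - (2*D.SA (u*v) + 6)*hd2
    have := (mul_eq_zero.mp hd0).resolve_left h6
    linear_combination this

end Aux4
/-- If `0 ≠ x ∈ J(A,μ)` with `x^♯ = 0`, then `A` has zero divisors, or `A` is a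
division algebra and `μ ∈ N_A(A^×)·1`. -/
theorem Jsharp_zero_dichotomy (F A : Type*) [Field F] [Ring A] [Algebra F A]
    (h2 : (2 : F) ≠ 0) (h3 : (3 : F) ≠ 0) (D : DegreeThreeAlg F A) (μ : Aˣ)
    (hsh : ∀ y : A, y * D.sharp y = D.NA y • (1 : A) ∧ D.sharp y * y = D.NA y • (1 : A))
    (hinv : ∀ y : A, IsUnit y ↔ D.NA y ≠ 0) :
    ∀ x : A × A × A, x ≠ 0 → Jsharp D μ x = 0 →
      (∃ a b : A, a ≠ 0 ∧ b ≠ 0 ∧ a * b = 0) ∨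
      ((∀ a : A, a ≠ 0 →
          Function.Bijective (fun b : A => a * b) ∧ Function.Bijective (fun b : A => b * a)) ∧
        ∃ a : Aˣ, (↑μ : A) = D.NA (↑a : A) • (1 : A)) := by
  rintro ⟨x0, x1, x2⟩ hx hxs
  by_cases hzd : ∃ a b : A, a ≠ 0 ∧ b ≠ 0 ∧ a * b = 0
  · exact Or.inl hzd
  right
  push_neg at hzd
  have hone : (1:A) ≠ 0 := by
    intro h1
    apply hx
    have hall : ∀ a : A, a = 0 := fun a => by
      calc a = a * 1 := (mul_one a).symm
      _ = a * 0 := by rw [h1]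
      _ = 0 := mul_zero a
    rw [hall x0, hall x1, hall x2]
    rfl
  have hnzd : ∀ a b : A, a * b = 0 → a = 0 ∨ b = 0 := by
    intro a b hab
    by_contra hcon
    push_neg at hcon
    exact hzd a b hcon.1 hcon.2 hab
  have hdivN : ∀ a : A, a ≠ 0 → D.NA a ≠ 0 := by
    intro a ha hNa
    have hsa : D.sharp a = 0 := by
      rcases hnzd a (D.sharp a) (by rw [(hsh a).1, hNa, zero_smul]) with h | h
      · exact absurd h ha
      · exact h
    have hq : a * a - D.TA a • a + D.SA a • (1:A) = 0 := by
      have h := (D.sharp_def a).symm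
      rw [hsa, pow_two a] at h
      exact h
    have hA := eq_neg_of_add_eq_zero_left hq
    have hkey : a * (D.TA a • (1:A) - a) = D.SA a • (1:A) := by
      rw [mul_sub, mul_smul_comm, mul_one]
      calc D.TA a • a - a * a = -(a * a - D.TA a • a) := by abel
      _ = -(-(D.SA a • (1:A))) := by rw [hA]
      _ = D.SA a • (1:A) := neg_neg _
    have hkey2 : (D.TA a • (1:A) - a) * a = D.SA a • (1:A) := by
      rw [sub_mul, smul_mul_assoc, one_mul]
      calc D.TA a • a - a * a = -(a * a - D.TA a • a) := by abel
      _ = -(-(D.SA a • (1:A))) := by rw [hA]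
      _ = D.SA a • (1:A) := neg_neg _
    rcases eq_or_ne (D.SA a) 0 with hSa | hSa
    · have h0 : a * (D.TA a • (1:A) - a) = 0 := by rw [hkey, hSa, zero_smul]
      rcases hnzd _ _ h0 with h | h
      · exact ha h
      · have haT : a = D.TA a • (1:A) := (sub_eq_zero.mp h).symm
        have hTa : D.TA a ≠ 0 := by
          intro h'
          apply ha
          rw [haT, h', zero_smul]
        obtain ⟨t, ht⟩ : ∃ t, D.TA a = t := ⟨_, rfl⟩
        rw [ht] at haT hTa
        have hU : IsUnit a := by
          refine ⟨⟨a, t⁻¹ • (1:A), ?_, ?_⟩, rfl⟩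
          · rw [haT, smul_mul_assoc, one_mul, smul_smul, mul_inv_cancel₀ hTa, one_smul]
          · rw [haT, smul_mul_assoc, one_mul, smul_smul, inv_mul_cancel₀ hTa, one_smul]
        exact (hinv a).mp hU hNa
    · have hU : IsUnit a := by
        refine ⟨⟨a, (D.SA a)⁻¹ • (D.TA a • (1:A) - a), ?_, ?_⟩, rfl⟩
        · rw [mul_smul_comm, hkey, smul_smul, inv_mul_cancel₀ hSa, one_smul]
        · rw [smul_mul_assoc, hkey2, smul_smul, inv_mul_cancel₀ hSa, one_smul]
      exact (hinv a).mp hU hNa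
  refine ⟨?_, ?_⟩
  · intro a ha
    have hUa : IsUnit a := (hinv a).mpr (hdivN a ha)
    obtain ⟨w, rfl⟩ := hUa
    refine ⟨⟨?_, ?_⟩, ⟨?_, ?_⟩⟩
    · intro b c h
      simpa using congrArg (fun z => (↑w⁻¹ : A) * z) h
    · intro b
      exact ⟨(↑w⁻¹ : A) * b, by simp⟩
    · intro b c h
      simpa using congrArg (fun z => z * (↑w⁻¹ : A)) h
    · intro b
      exact ⟨b * (↑w⁻¹ : A), by simp⟩
  · unfold Jsharp at hxs
    rw [Prod.ext_iff] at hxs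
    obtain ⟨hh0, hxs2⟩ := hxs
    rw [Prod.ext_iff] at hxs2
    obtain ⟨hh1, hh2⟩ := hxs2
    simp only [] at hh0 hh1 hh2
    have E1 : D.sharp x0 = x1 * x2 := by
      rw [← sub_eq_zero]
      exact hh0
    have E2 : (↑μ⁻¹ : A) * D.sharp x2 = x0 * x1 := by
      rw [← sub_eq_zero]
      exact hh1
    have E3 : (↑μ : A) * D.sharp x1 = x2 * x0 := by
      rw [← sub_eq_zero]
      exact hh2
    have hsharp0 : D.sharp (0:A) = 0 := by
      rw [D.sharp_def]
      simp [d3_TA_zero, D.SA_def, d3_Ndir_left_zero]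
    have hsz : ∀ z : A, D.sharp z = 0 → z = 0 := by
      intro z hz
      by_contra hz0
      have h0 : D.NA z • (1:A) = 0 := by rw [← (hsh z).1, hz, mul_zero]
      exact hdivN z hz0 (smul_one_eq_zero_iff hone h0)
    have hx1ne : x1 ≠ 0 := by
      intro h1
      have hs2 : D.sharp x2 = 0 := by
        have h0 : (↑μ⁻¹:A) * D.sharp x2 = 0 := by rw [E2, h1, mul_zero]
        calc D.sharp x2 = (↑μ:A) * ((↑μ⁻¹:A) * D.sharp x2) := by
              rw [← mul_assoc, Units.mul_inv, one_mul]
        _ = 0 := by rw [h0, mul_zero]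
      have hx2z : x2 = 0 := hsz x2 hs2
      have hs0 : D.sharp x0 = 0 := by rw [E1, h1, zero_mul]
      have hx0z : x0 = 0 := hsz x0 hs0
      apply hx
      rw [hx0z, h1, hx2z]
      rfl
    have hn1 : D.NA x1 ≠ 0 := hdivN x1 hx1ne
    have hs1ne : D.sharp x1 ≠ 0 := fun h => hx1ne (hsz x1 h)
    have hmufree : ∀ s : A, (↑μ:A) * s = 0 → s = 0 := by
      intro s hs
      calc s = (↑μ⁻¹:A) * ((↑μ:A) * s) := by rw [← mul_assoc, Units.inv_mul, one_mul]
      _ = 0 := by rw [hs, mul_zero]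
    have hx2ne : x2 ≠ 0 := by
      intro h
      apply hs1ne
      apply hmufree
      rw [E3, h, zero_mul]
    have hx0ne : x0 ≠ 0 := by
      intro h
      apply hs1ne
      apply hmufree
      rw [E3, h, mul_zero]
    have hn0 : D.NA x0 ≠ 0 := hdivN x0 hx0ne
    have hn2 : D.NA x2 ≠ 0 := hdivN x2 hx2ne
    have hA1 : x0 * (x1 * x2) = D.NA x0 • (1:A) := by rw [← E1]; exact (hsh x0).1
    have hA2 : x0 * (x1 * x2) = D.NA x2 • (↑μ⁻¹:A) := by
      calc x0 * (x1 * x2) = (x0 * x1) * x2 := (mul_assoc _ _ _).symm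
      _ = ((↑μ⁻¹:A) * D.sharp x2) * x2 := by rw [E2]
      _ = (↑μ⁻¹:A) * (D.sharp x2 * x2) := mul_assoc _ _ _
      _ = (↑μ⁻¹:A) * (D.NA x2 • (1:A)) := by rw [(hsh x2).2]
      _ = D.NA x2 • (↑μ⁻¹:A) := by rw [mul_smul_comm, mul_one]
    have hmuinv : (↑μ⁻¹:A) = ((D.NA x2)⁻¹ * D.NA x0) • (1:A) := by
      have h := hA1.symm.trans hA2
      calc (↑μ⁻¹:A) = (D.NA x2)⁻¹ • (D.NA x2 • (↑μ⁻¹:A)) := by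
            rw [smul_smul, inv_mul_cancel₀ hn2, one_smul]
      _ = (D.NA x2)⁻¹ • (D.NA x0 • (1:A)) := by rw [← h]
      _ = ((D.NA x2)⁻¹ * D.NA x0) • (1:A) := by rw [smul_smul]
    have hB1 : (x2 * x0) * x1 = D.NA x1 • (↑μ:A) := by
      rw [← E3]
      calc ((↑μ:A) * D.sharp x1) * x1 = (↑μ:A) * (D.sharp x1 * x1) := mul_assoc _ _ _
      _ = (↑μ:A) * (D.NA x1 • (1:A)) := by rw [(hsh x1).2]
      _ = D.NA x1 • (↑μ:A) := by rw [mul_smul_comm, mul_one]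
    have hB2 : x2 * (x0 * x1) = D.NA x0 • (1:A) := by
      calc x2 * (x0 * x1) = x2 * ((↑μ⁻¹:A) * D.sharp x2) := by rw [E2]
      _ = x2 * ((((D.NA x2)⁻¹ * D.NA x0) • (1:A)) * D.sharp x2) := by rw [hmuinv]
      _ = ((D.NA x2)⁻¹ * D.NA x0) • (x2 * D.sharp x2) := by
            rw [smul_mul_assoc, one_mul, mul_smul_comm]
      _ = ((D.NA x2)⁻¹ * D.NA x0) • (D.NA x2 • (1:A)) := by rw [(hsh x2).1]
      _ = D.NA x0 • (1:A) := by
            rw [smul_smul]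
            congr 1
            field_simp
    have hmu : (↑μ:A) = ((D.NA x1)⁻¹ * D.NA x0) • (1:A) := by
      have h := hB1
      rw [mul_assoc, hB2] at h
      calc (↑μ:A) = (D.NA x1)⁻¹ • (D.NA x1 • (↑μ:A)) := by
            rw [smul_smul, inv_mul_cancel₀ hn1, one_smul]
      _ = (D.NA x1)⁻¹ • (D.NA x0 • (1:A)) := by rw [← h]
      _ = ((D.NA x1)⁻¹ * D.NA x0) • (1:A) := by rw [smul_smul]
    by_cases hcase : ∃ c : F, x0 = c • x1
    · obtain ⟨c, hc⟩ := hcase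
      have hcne : c ≠ 0 := by
        intro h
        apply hx0ne
        rw [hc, h, zero_smul]
      refine ⟨⟨c • (1:A), c⁻¹ • (1:A), ?_, ?_⟩, ?_⟩
      · rw [smul_mul_assoc, one_mul, smul_smul, mul_inv_cancel₀ hcne, one_smul]
      · rw [smul_mul_assoc, one_mul, smul_smul, inv_mul_cancel₀ hcne, one_smul]
      · show (↑μ:A) = D.NA (c • (1:A)) • (1:A)
        rw [hmu, D.NA_smul, D.NA_one]
        congr 1
        rw [hc, D.NA_smul]
        field_simp
    · set v := (D.NA x1)⁻¹ • D.sharp x1 with hv_def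
      have hx1v : x1 * v = 1 := by
        rw [hv_def, mul_smul_comm, (hsh x1).1, smul_smul, inv_mul_cancel₀ hn1, one_smul]
      have hvne : v ≠ 0 := by
        intro h
        apply hone
        rw [← hx1v, h, mul_zero]
      have hNv : D.NA v = (D.NA x1)⁻¹ := by
        rw [hv_def, D.NA_smul, d3_N_sharp D h2 hone hsh]
        field_simp
      have hNuv : D.NA (x0 * v) = D.NA x0 * D.NA v :=
        d3_key_mult D h2 h3 hone hsh hdivN x0 v hx0ne hvne
      have hval : D.NA (x0 * v) = (D.NA x1)⁻¹ * D.NA x0 := by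
        rw [hNuv, hNv]
        ring
      have hNuvne : D.NA (x0 * v) ≠ 0 := by
        rw [hval]
        exact mul_ne_zero (inv_ne_zero hn1) hn0
      obtain ⟨a, ha⟩ := (hinv (x0 * v)).mpr hNuvne
      refine ⟨a, ?_⟩
      rw [ha, hval, hmu]
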